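/- Let G₁ and G₂ be torsion-free directed partially ordered groups, n ≥ 1, and let f : Γ(ℤ ⃗× G₁, (n,0)) → Γ(ℤ ⃗× G₂, (n,0)) be a morphism of pseudo-effect algebras (f(0)=0, f(1)=1, additive on existing sums). Then f maps each component Eᵢ = {(i,g)} ∩ E of the n-decomposition of the first algebra into the corresponding component Fᵢ of the second, and there exists a unique po-group homomorphism h : G₁ → G₂ such that f(0,g) = (0, h(g)) for all g ∈ G₁⁺. -/

import Mathlib

/-- A pseudo-effect algebra (PEA): a structure with a partial addition `add`
(with domain of definition `D`), a zero and a one, satisfying (PE1)-(PE4)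
together with the (derivable) neutrality of zero. -/
structure PEA (E : Type) where
  /-- `D a b` means that the partial sum `a + b` is defined. -/
  D : E → E → Prop
  /-- The partial addition (its value is relevant only when `D a b` holds). -/
  add : E → E → E
  zero : E
  one : E
  /-- (PE1), definedness part. -/
  assoc_defined : ∀ a b c, (D a b ∧ D (add a b) c) ↔ (D b c ∧ D a (add b c))
  /-- (PE1), equality part. -/
  assoc_eq : ∀ a b c, D a b → D (add a b) c → add (add a b) c = add a (add b c)
  /-- (PE2), right complement. -/
  compl_right : ∀ a, ∃! d, D a d ∧ add a d = one
  /-- (PE2), left complement. -/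
  compl_left : ∀ a, ∃! e, D e a ∧ add e a = one
  /-- (PE3). -/
  pe3 : ∀ a b, D a b →
    (∃ d, D d a ∧ add d a = add a b) ∧ (∃ e, D b e ∧ add b e = add a b)
  /-- (PE4). -/
  pe4_right : ∀ a, D a one → a = zero
  pe4_left : ∀ a, D one a → a = zero
  D_zero_right : ∀ a, D a zero
  D_zero_left : ∀ a, D zero a
  add_zero : ∀ a, add a zero = a
  zero_add : ∀ a, add zero a = a

namespace PEA

variable {E : Type} (P : PEA E)

/-- The induced partial order: `a ≤ b` iff `a + c = b` for some `c`. -/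
def le (a b : E) : Prop := ∃ c, P.D a c ∧ P.add a c = b

/-- The left complement `a⁻`, the unique element with `a⁻ + a = 1`. -/
noncomputable def lneg (a : E) : E := (P.compl_left a).choose

/-- The right complement `a~`, the unique element with `a + a~ = 1`. -/
noncomputable def rneg (a : E) : E := (P.compl_right a).choose

/-- `E` is weakly commutative if `a + b` is defined iff `b + a` is defined. -/
def WeaklyCommutative : Prop := ∀ a b, P.D a b ↔ P.D b a

/-- `E` is symmetric if the two complements coincide. -/
def Symmetric : Prop := ∀ a, P.lneg a = P.rneg a

/-- A state on a PEA: a `[0,1]`-valued map, additive on existing sums, sending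
`0 ↦ 0` and `1 ↦ 1`. -/
def IsState (s : E → ℝ) : Prop :=
  s P.zero = 0 ∧ s P.one = 1 ∧ (∀ a, 0 ≤ s a ∧ s a ≤ 1) ∧
    ∀ a b, P.D a b → s (P.add a b) = s a + s b

/-- An `(n+1)`-valued discrete state: a state whose range is `{0, 1/n, …, 1}`. -/
def IsDiscreteState (n : ℕ) (s : E → ℝ) : Prop :=
  P.IsState s ∧ Set.range s = {x : ℝ | ∃ i ≤ n, x = (i : ℝ) / n}

/-- An ideal: a nonempty downward closed subset closed under existing sums. -/
def IsIdeal (I : Set E) : Prop :=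
  I.Nonempty ∧ (∀ a i, i ∈ I → P.le a i → a ∈ I) ∧
    ∀ i j, i ∈ I → j ∈ I → P.D i j → P.add i j ∈ I

/-- A normal ideal: `a + i = j + a` implies `i ∈ I ↔ j ∈ I`. -/
def IsNormalIdeal (I : Set E) : Prop :=
  P.IsIdeal I ∧ ∀ a i j, P.D a i → P.D j a → P.add a i = P.add j a → (i ∈ I ↔ j ∈ I)

/-- A maximal ideal: proper and not properly contained in a proper ideal. -/
def IsMaximalIdeal (I : Set E) : Prop :=
  P.IsIdeal I ∧ P.one ∉ I ∧ ∀ J, P.IsIdeal J → P.one ∉ J → I ⊆ J → I = J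

/-- `n`-fold partial multiple of an element. -/
def nmul : ℕ → E → E
  | 0, _ => P.zero
  | k + 1, a => P.add (nmul k a) a

/-- Definedness of the `n`-fold partial multiple. -/
def nmulD : ℕ → E → Prop
  | 0, _ => True
  | k + 1, a => nmulD k a ∧ P.D (P.nmul k a) a

/-- The set of elements of infinite isotropic index. -/
def Infinit : Set E := {a | ∀ k, P.nmulD k a}

/-- An `n`-decomposition of a PEA. -/
def IsNDecomp (n : ℕ) (F : ℕ → Set E) : Prop :=
  (∀ i, i ≤ n → (F i).Nonempty) ∧
  (∀ i j, i ≤ n → j ≤ n → i ≠ j → F i ∩ F j = ∅) ∧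
  ((⋃ i ∈ Set.Iic n, F i) = Set.univ) ∧
  (∀ i, i ≤ n → P.lneg '' F i = F (n - i) ∧ P.rneg '' F i = F (n - i)) ∧
  (∀ i j, i ≤ n → j ≤ n → ∀ x ∈ F i, ∀ y ∈ F j, P.D x y →
     i + j ≤ n ∧ P.add x y ∈ F (i + j))

/-- An `n`-perfect PEA: an `n`-decomposition with all sums `Eᵢ + Eⱼ`, `i+j < n`,
existing, and whose bottom slice is the unique maximal ideal. -/
def IsNPerfect (n : ℕ) (F : ℕ → Set E) : Prop :=
  P.IsNDecomp n F ∧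
  (∀ i j, i + j < n → ∀ x ∈ F i, ∀ y ∈ F j, P.D x y) ∧
  (P.IsMaximalIdeal (F 0) ∧ ∀ J, P.IsMaximalIdeal J → J = F 0)

end PEA

set_option linter.unusedSectionVars false
section IntervalPEA

variable {H : Type} [AddGroup H] [PartialOrder H]
  [CovariantClass H H (· + ·) (· ≤ ·)]
  [CovariantClass H H (Function.swap (· + ·)) (· ≤ ·)]

/-- The carrier of the interval `Γ(H, u) = [0, u]` in a po-group `H`. -/
def GammaSet (u : H) : Type := {x : H // 0 ≤ x ∧ x ≤ u}

namespace GammaInterval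

variable (u : H) (hu : 0 ≤ u)

/-- Definedness of the partial addition of `Γ(H,u)`. -/
def gD (a b : GammaSet u) : Prop := a.1 + b.1 ≤ u

open Classical in
/-- The partial addition of `Γ(H,u)` (junk value `0` outside its domain). -/
noncomputable def gadd (a b : GammaSet u) : GammaSet u :=
  if h : a.1 + b.1 ≤ u then ⟨a.1 + b.1, add_nonneg a.2.1 b.2.1, h⟩
  else ⟨0, le_refl 0, hu⟩

lemma gadd_val {a b : GammaSet u} (h : gD u a b) :
    (gadd u hu a b).1 = a.1 + b.1 := by
  have h' : a.1 + b.1 ≤ u := h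
  unfold gadd
  first
    | exact congrArg Subtype.val (dif_pos h')
    | (split_ifs with h1 <;> first | rfl | exact absurd h' h1)

/-- The interval `Γ(H, u)` as a pseudo-effect algebra. -/
noncomputable def Gamma : PEA (GammaSet u) where
  D := gD u
  add := gadd u hu
  zero := ⟨0, le_refl 0, hu⟩
  one := ⟨u, hu, le_refl u⟩
  assoc_defined := by
    intro a b c
    constructor
    · rintro ⟨h1, h2⟩
      have h2a : (gadd u hu a b).1 + c.1 ≤ u := h2
      have h2' : a.1 + b.1 + c.1 ≤ u := by rwa [gadd_val u hu h1] at h2a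
      have h3 : a.1 + (b.1 + c.1) ≤ u := by rwa [← add_assoc]
      have hbc : gD u b c := le_trans (le_add_of_nonneg_left a.2.1) h3
      refine ⟨hbc, ?_⟩
      show a.1 + (gadd u hu b c).1 ≤ u
      rwa [gadd_val u hu hbc]
    · rintro ⟨h1, h2⟩
      have h2a : a.1 + (gadd u hu b c).1 ≤ u := h2
      have h2' : a.1 + (b.1 + c.1) ≤ u := by rwa [gadd_val u hu h1] at h2a
      have hab : gD u a b :=
        le_trans (add_le_add_right (le_add_of_nonneg_right c.2.1) a.1) h2'
      refine ⟨hab, ?_⟩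
      show (gadd u hu a b).1 + c.1 ≤ u
      rw [gadd_val u hu hab, add_assoc]
      exact h2'
  assoc_eq := by
    intro a b c h1 h2
    have h2' : a.1 + b.1 + c.1 ≤ u := by
      have h2a : (gadd u hu a b).1 + c.1 ≤ u := h2
      rwa [gadd_val u hu h1] at h2a
    have h3 : a.1 + (b.1 + c.1) ≤ u := by rwa [← add_assoc]
    have hbc : gD u b c := le_trans (le_add_of_nonneg_left a.2.1) h3
    have habc : gD u a (gadd u hu b c) := by
      show a.1 + (gadd u hu b c).1 ≤ u
      rwa [gadd_val u hu hbc]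
    apply Subtype.ext
    rw [gadd_val u hu h2, gadd_val u hu h1, gadd_val u hu habc, gadd_val u hu hbc,
      add_assoc]
  compl_right := by
    intro a
    have h1 : (0 : H) ≤ -a.1 + u := by
      rw [le_neg_add_iff_add_le, add_zero]; exact a.2.2
    have h2 : -a.1 + u ≤ u := by
      simpa using add_le_add_right (neg_nonpos.mpr a.2.1) u
    have hD : gD u a ⟨-a.1 + u, h1, h2⟩ := by
      show a.1 + (-a.1 + u) ≤ u
      rw [add_neg_cancel_left]
    refine ⟨⟨-a.1 + u, h1, h2⟩, ⟨hD, ?_⟩, ?_⟩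
    · apply Subtype.ext
      rw [gadd_val u hu hD]
      exact add_neg_cancel_left a.1 u
    · rintro y ⟨hy1, hy2⟩
      apply Subtype.ext
      have hv := congrArg Subtype.val hy2
      rw [gadd_val u hu hy1] at hv
      show y.1 = -a.1 + u
      rw [eq_neg_add_iff_add_eq]
      exact hv
  compl_left := by
    intro a
    have h1 : (0 : H) ≤ u + -a.1 := by
      simpa using add_le_add_right a.2.2 (-a.1)
    have h2 : u + -a.1 ≤ u := by
      simpa using add_le_add_left (neg_nonpos.mpr a.2.1) u
    have hD : gD u ⟨u + -a.1, h1, h2⟩ a := by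
      show (u + -a.1) + a.1 ≤ u
      rw [neg_add_cancel_right]
    refine ⟨⟨u + -a.1, h1, h2⟩, ⟨hD, ?_⟩, ?_⟩
    · apply Subtype.ext
      rw [gadd_val u hu hD]
      exact neg_add_cancel_right u a.1
    · rintro y ⟨hy1, hy2⟩
      apply Subtype.ext
      have hv := congrArg Subtype.val hy2
      rw [gadd_val u hu hy1] at hv
      show y.1 = u + -a.1
      rw [eq_add_neg_iff_add_eq]
      exact hv
  pe3 := by
    intro a b h
    constructor
    · have h1 : (0 : H) ≤ a.1 + b.1 + -a.1 := by
        have : a.1 + 0 + -a.1 ≤ a.1 + b.1 + -a.1 :=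
          add_le_add_left (add_le_add_right b.2.1 a.1) (-a.1)
        simpa using this
      have h2 : a.1 + b.1 + -a.1 ≤ u := by
        calc a.1 + b.1 + -a.1 ≤ u + -a.1 := add_le_add_left h (-a.1)
          _ ≤ u + 0 := add_le_add_right (neg_nonpos.mpr a.2.1) u
          _ = u := add_zero u
      have hD : gD u ⟨a.1 + b.1 + -a.1, h1, h2⟩ a := by
        show (a.1 + b.1 + -a.1) + a.1 ≤ u
        rw [neg_add_cancel_right]
        exact h
      refine ⟨⟨a.1 + b.1 + -a.1, h1, h2⟩, hD, ?_⟩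
      apply Subtype.ext
      rw [gadd_val u hu hD, gadd_val u hu h]
      exact neg_add_cancel_right (a.1 + b.1) a.1
    · have h1 : (0 : H) ≤ -b.1 + (a.1 + b.1) := by
        have : -b.1 + b.1 ≤ -b.1 + (a.1 + b.1) :=
          add_le_add_right (le_add_of_nonneg_left a.2.1) (-b.1)
        simpa using this
      have h2 : -b.1 + (a.1 + b.1) ≤ u := by
        calc -b.1 + (a.1 + b.1) ≤ -b.1 + u := add_le_add_right h (-b.1)
          _ ≤ 0 + u := add_le_add_left (neg_nonpos.mpr b.2.1) u
          _ = u := zero_add u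
      have hD : gD u b ⟨-b.1 + (a.1 + b.1), h1, h2⟩ := by
        show b.1 + (-b.1 + (a.1 + b.1)) ≤ u
        rw [add_neg_cancel_left]
        exact h
      refine ⟨⟨-b.1 + (a.1 + b.1), h1, h2⟩, hD, ?_⟩
      apply Subtype.ext
      rw [gadd_val u hu hD, gadd_val u hu h]
      exact add_neg_cancel_left b.1 (a.1 + b.1)
  pe4_right := by
    intro a h
    apply Subtype.ext
    have h' : a.1 + u ≤ u := h
    have h'' : a.1 + u + -u ≤ u + -u := add_le_add_left h' (-u)
    simp only [add_neg_cancel_right, add_neg_cancel] at h''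
    exact le_antisymm h'' a.2.1
  pe4_left := by
    intro a h
    apply Subtype.ext
    have h' : u + a.1 ≤ u := h
    have h'' : -u + (u + a.1) ≤ -u + u := add_le_add_right h' (-u)
    simp only [neg_add_cancel_left, neg_add_cancel] at h''
    exact le_antisymm h'' a.2.1
  D_zero_right := by
    intro a
    show a.1 + 0 ≤ u
    simpa using a.2.2
  D_zero_left := by
    intro a
    show 0 + a.1 ≤ u
    simpa using a.2.2
  add_zero := by
    intro a
    apply Subtype.ext
    have h : gD u a ⟨0, le_refl 0, hu⟩ := by
      show a.1 + 0 ≤ u; simpa using a.2.2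
    rw [gadd_val u hu h]
    exact add_zero a.1
  zero_add := by
    intro a
    apply Subtype.ext
    have h : gD u ⟨0, le_refl 0, hu⟩ a := by
      show 0 + a.1 ≤ u; simpa using a.2.2
    rw [gadd_val u hu h]
    exact zero_add a.1

end GammaInterval

end IntervalPEA

section ZLexSection

/-- The lexicographic product `ℤ ⃗× G`. -/
def ZLex (G : Type) : Type := ℤ × G

namespace ZLex

variable {G : Type} [AddGroup G] [PartialOrder G]
  [CovariantClass G G (· + ·) (· ≤ ·)]
  [CovariantClass G G (Function.swap (· + ·)) (· ≤ ·)]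

instance : AddGroup (ZLex G) := inferInstanceAs (AddGroup (ℤ × G))

/-- Build an element of `ℤ ⃗× G`. -/
def mk (i : ℤ) (g : G) : ZLex G := ((i, g) : ℤ × G)

/-- First (integer) component. -/
def idx (x : ZLex G) : ℤ := (x : ℤ × G).1

/-- Second (group) component. -/
def snd (x : ZLex G) : G := (x : ℤ × G).2

instance : PartialOrder (ZLex G) where
  le p q := idx p < idx q ∨ (idx p = idx q ∧ snd p ≤ snd q)
  le_refl p := Or.inr ⟨rfl, le_refl _⟩
  le_trans p q r := by
    rintro (h | ⟨e, h⟩) (h' | ⟨e', h'⟩)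
    · exact Or.inl (lt_trans h h')
    · exact Or.inl (lt_of_lt_of_eq h e')
    · exact Or.inl (lt_of_eq_of_lt e h')
    · exact Or.inr ⟨e.trans e', le_trans h h'⟩
  le_antisymm p q := by
    rintro (h | ⟨e, h⟩) (h' | ⟨e', h'⟩)
    · exact absurd (lt_trans h h') (lt_irrefl _)
    · exact absurd h (by rw [e']; exact lt_irrefl _)
    · exact absurd h' (by rw [e]; exact lt_irrefl _)
    · have h2 : snd p = snd q := le_antisymm h h'
      show ((idx p, snd p) : ℤ × G) = ((idx q, snd q) : ℤ × G)
      rw [e, h2]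

lemma le_def (p q : ZLex G) :
    p ≤ q ↔ idx p < idx q ∨ (idx p = idx q ∧ snd p ≤ snd q) := Iff.rfl

lemma add_def (p q : ZLex G) :
    p + q = mk (idx p + idx q) (snd p + snd q) := rfl

instance : CovariantClass (ZLex G) (ZLex G) (· + ·) (· ≤ ·) := by
  constructor
  rintro c a b (h | ⟨e, h⟩)
  · exact Or.inl (Int.add_lt_add_left h _)
  · exact Or.inr ⟨by show idx c + idx a = idx c + idx b; rw [e],
      add_le_add_right h _⟩

instance : CovariantClass (ZLex G) (ZLex G) (Function.swap (· + ·)) (· ≤ ·) := by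
  constructor
  rintro c a b (h | ⟨e, h⟩)
  · exact Or.inl (Int.add_lt_add_right h _)
  · exact Or.inr ⟨by show idx a + idx c = idx b + idx c; rw [e],
      add_le_add_left h _⟩

end ZLex

end ZLexSection


/-!
Elements of index `0` admit arbitrarily long defined sums, so a morphism sends them to index
`0`; the element `(1,0)` is an `n`-th part of the unit, so it goes to index `1`; and every
`(i,g)` becomes `(i,0)` after adding index-`0` elements on both sides, which pins down the index
of its image. On `E₀` the morphism is thus an additive map `G₁⁺ → G₂⁺`, and in a directed group
every `g` is `(g + c) - c` with `c`, `g + c` positive, which extends that map uniquely to a group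
homomorphism.
-/

section PositiveConeExtension

variable {G H : Type*} [AddGroup G] [Preorder G] [AddLeftMono G] [IsDirectedOrder G] [AddGroup H]

lemma exists_nonneg_add_nonneg (g : G) : ∃ c, 0 ≤ c ∧ 0 ≤ g + c := by
  obtain ⟨c, hc, hgc⟩ := exists_ge_ge 0 (-g)
  exact ⟨c, hc, by simpa using add_le_add_right hgc g⟩

theorem AddMonoidHom.ext_nonneg {ψ₁ ψ₂ : G →+ H} (h : ∀ g, 0 ≤ g → ψ₁ g = ψ₂ g) : ψ₁ = ψ₂ := by
  ext g
  obtain ⟨c, hc, hgc⟩ := exists_nonneg_add_nonneg g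
  have hsplit (ψ : G →+ H) : ψ g = ψ (g + c) - ψ c := by rw [map_add, add_sub_cancel_right]
  rw [hsplit ψ₁, hsplit ψ₂, h _ hgc, h _ hc]

namespace AddMonoidHom

variable (φ : AddSubmonoid.nonneg G →+ H)

lemma map_sub_map_eq_of_le {x c y d : AddSubmonoid.nonneg G} (h : (x : G) - c = y - d)
    (hcd : (c : G) ≤ d) : φ x - φ c = φ y - φ d := by
  have he : 0 ≤ -(c : G) + d := by simpa using add_le_add_right hcd (-(c : G))
  have hy : φ y = φ x + φ ⟨_, he⟩ := by
    rw [← map_add]; congr 1; ext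
    rw [AddSubmonoid.coe_add, ← add_assoc, ← sub_eq_add_neg, h, sub_add_cancel]
  have hd : φ d = φ c + φ ⟨_, he⟩ := by
    rw [← map_add]; congr 1; ext; simp
  rw [hy, hd, sub_eq_add_neg, sub_eq_add_neg, neg_add_rev, add_assoc, add_neg_cancel_left]

lemma map_sub_map_eq {x c y d : AddSubmonoid.nonneg G} (h : (x : G) - c = y - d) :
    φ x - φ c = φ y - φ d := by
  obtain ⟨e, hce, hde⟩ := exists_ge_ge (c : G) d
  have he : 0 ≤ e := c.2.trans hce
  have hxe : 0 ≤ (x : G) - c + e :=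
    x.2.trans (by simpa using add_le_add_right hce ((x : G) - c))
  rw [φ.map_sub_map_eq_of_le (y := ⟨_, hxe⟩) (d := ⟨e, he⟩) (by simp) hce,
    φ.map_sub_map_eq_of_le (x := y) (c := d) (y := ⟨_, hxe⟩) (d := ⟨e, he⟩) (by simp [h]) hde]

theorem exists_extension_of_nonneg : ∃ ψ : G →+ H, ∀ g : AddSubmonoid.nonneg G, ψ g = φ g := by
  choose c hc hgc using exists_nonneg_add_nonneg (G := G)
  let pos (g : G) (hg : 0 ≤ g) : AddSubmonoid.nonneg G := ⟨g, AddSubmonoid.mem_nonneg.2 hg⟩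
  refine ⟨AddMonoidHom.mk' (fun g ↦ φ (pos _ (hgc g)) - φ (pos _ (hc g))) fun a b ↦ ?_,
    fun g ↦ ?_⟩
  · -- `b + d ≥ c a` makes `b + d` admissible for `a`
    obtain ⟨d, hd, hbd⟩ := exists_ge_ge 0 (-b + c a)
    have hbd' : c a ≤ b + d := by simpa using add_le_add_right hbd b
    have hbd'' : 0 ≤ b + d := (hc a).trans hbd'
    have habd : 0 ≤ a + (b + d) := (hgc a).trans (add_le_add_right hbd' a)
    rw [φ.map_sub_map_eq (y := pos _ habd) (d := pos d hd)
        (by simp [pos, sub_eq_add_neg, add_assoc]),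
      φ.map_sub_map_eq (x := pos _ (hgc a)) (y := pos _ habd) (d := pos _ hbd'')
        (by simp [pos, sub_eq_add_neg, add_assoc]),
      φ.map_sub_map_eq (x := pos _ (hgc b)) (y := pos _ hbd'') (d := pos d hd)
        (by simp [pos, sub_eq_add_neg, add_assoc]), sub_add_sub_cancel]
  · simp only [AddMonoidHom.mk'_apply]
    rw [φ.map_sub_map_eq (y := g) (d := 0) (by simp [pos, sub_eq_add_neg, add_assoc]), map_zero,
      sub_zero]

end AddMonoidHom

end PositiveConeExtension

namespace GammaInterval

variable {H K : Type} [AddGroup H] [PartialOrder H] [AddGroup K] [PartialOrder K] {u : H} {v : K}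

/-- Additivity of a map of intervals `Γ(H,u) → Γ(K,v)`, read in the ambient groups so that no
partial operation is involved. -/
def IsAdditiveMap (f : GammaSet u → GammaSet v) : Prop :=
  ∀ a b c : GammaSet u, a.1 + b.1 = c.1 → (f a).1 + (f b).1 = (f c).1

lemma isAdditiveMap_of_map_add [AddLeftMono H] [AddRightMono H] [AddLeftMono K] [AddRightMono K]
    {hu : 0 ≤ u} {hv : 0 ≤ v} {f : GammaSet u → GammaSet v}
    (hf : ∀ a b, (Gamma u hu).D a b →
      (Gamma v hv).D (f a) (f b) ∧ f ((Gamma u hu).add a b) = (Gamma v hv).add (f a) (f b)) :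
    IsAdditiveMap f := by
  intro a b c habc
  have hab : gD u a b := show a.1 + b.1 ≤ u from habc ▸ c.2.2
  obtain ⟨hD, hfab⟩ := hf a b hab
  have hc : gadd u hu a b = c := Subtype.ext ((gadd_val u hu hab).trans habc)
  rw [← hc, ← gadd_val v hv hD]
  exact congrArg Subtype.val hfab.symm

namespace IsAdditiveMap

variable {f : GammaSet u → GammaSet v} (hf : IsAdditiveMap f)
include hf

lemma val_eq_zero {x : GammaSet u} (hx : x.1 = 0) : (f x).1 = 0 :=
  add_eq_left.mp (hf x x x (by rw [hx, add_zero]))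

lemma add_eq_add [AddLeftMono H] {a b c d : GammaSet u} (h : a.1 + b.1 = c.1 + d.1)
    (hle : a.1 + b.1 ≤ u) : (f a).1 + (f b).1 = (f c).1 + (f d).1 := by
  let s : GammaSet u := ⟨a.1 + b.1, add_nonneg a.2.1 b.2.1, hle⟩
  rw [hf a b s rfl, hf c d s h.symm]

lemma val_nsmul [AddLeftMono H] {x y : GammaSet u} (k : ℕ) (hy : y.1 = k • x.1) :
    (f y).1 = k • (f x).1 := by
  induction k generalizing y with
  | zero => rw [zero_nsmul] at hy ⊢; exact hf.val_eq_zero hy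
  | succ k ih =>
    have hku : k • x.1 ≤ u := (nsmul_le_nsmul_left x.2.1 k.le_succ).trans (hy ▸ y.2.2)
    let z : GammaSet u := ⟨k • x.1, nsmul_nonneg x.2.1 k, hku⟩
    calc (f y).1 = (f z).1 + (f x).1 := (hf z x y (hy.trans (succ_nsmul _ _)).symm).symm
      _ = (k + 1) • (f x).1 := by rw [ih (y := z) rfl, succ_nsmul]

end IsAdditiveMap

end GammaInterval

namespace ZLex

section Basic

variable {G : Type} [AddGroup G] [PartialOrder G]

@[ext] lemma ext {p q : ZLex G} (h₁ : idx p = idx q) (h₂ : snd p = snd q) : p = q :=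
  Prod.ext h₁ h₂

@[simp] lemma idx_mk (i : ℤ) (g : G) : idx (mk i g) = i := rfl

@[simp] lemma snd_mk (i : ℤ) (g : G) : snd (mk i g) = g := rfl

@[simp] lemma idx_add (p q : ZLex G) : idx (p + q) = idx p + idx q := rfl

@[simp] lemma snd_add (p q : ZLex G) : snd (p + q) = snd p + snd q := rfl

@[simp] lemma idx_nsmul (k : ℕ) (p : ZLex G) : idx (k • p) = k • idx p := rfl

@[simp] lemma snd_nsmul (k : ℕ) (p : ZLex G) : snd (k • p) = k • snd p := rfl

@[simp] lemma idx_zero : idx (0 : ZLex G) = 0 := rfl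

@[simp] lemma snd_zero : snd (0 : ZLex G) = 0 := rfl

lemma mk_le_mk_of_le {i j : ℤ} (h : i ≤ j) (g : G) : mk i g ≤ mk j g :=
  h.lt_or_eq.imp id fun h ↦ ⟨h, le_rfl⟩

end Basic

section Interval

variable {G : Type} [AddGroup G] [PartialOrder G] {n : ℕ}

lemma idx_nonneg (x : GammaSet (mk (n : ℤ) (0 : G))) : 0 ≤ idx x.1 := by
  rcases x.2.1 with h | ⟨h, -⟩ <;> simp_all [le_of_lt]

lemma idx_le (x : GammaSet (mk (n : ℤ) (0 : G))) : idx x.1 ≤ n := by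
  rcases x.2.2 with h | ⟨h, -⟩ <;> simp_all [le_of_lt]

lemma snd_nonneg_of_idx_eq_zero (x : GammaSet (mk (n : ℤ) (0 : G))) (h : idx x.1 = 0) :
    0 ≤ snd x.1 := by
  rcases x.2.1 with h' | ⟨-, h'⟩ <;> simp_all

lemma snd_nonpos_of_idx_eq (x : GammaSet (mk (n : ℤ) (0 : G))) (h : idx x.1 = n) :
    snd x.1 ≤ 0 := by
  rcases x.2.2 with h' | ⟨-, h'⟩ <;> simp_all

lemma mk_zero_mem (hn : 0 < n) {g : G} (hg : 0 ≤ g) : 0 ≤ mk 0 g ∧ mk 0 g ≤ mk (n : ℤ) 0 :=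
  ⟨Or.inr ⟨rfl, hg⟩, Or.inl (by simpa using hn)⟩

lemma mk_nat_zero_mem {i : ℕ} (hi : i ≤ n) :
    0 ≤ mk (i : ℤ) (0 : G) ∧ mk (i : ℤ) (0 : G) ≤ mk (n : ℤ) 0 :=
  ⟨mk_le_mk_of_le (Nat.cast_nonneg i) 0, mk_le_mk_of_le (Nat.cast_le.2 hi) 0⟩

lemma exists_add_mk_zero_le [AddLeftMono G] [IsDirectedOrder G]
    (x : GammaSet (mk (n : ℤ) (0 : G))) :
    ∃ c, 0 ≤ c ∧ 0 ≤ snd x.1 + c ∧ x.1 + mk 0 c ≤ mk (n : ℤ) 0 := by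
  rcases (idx_le x).lt_or_eq with hlt | heq
  · obtain ⟨c, hc, hgc⟩ := exists_nonneg_add_nonneg (snd x.1)
    exact ⟨c, hc, hgc, Or.inl (by simpa using hlt)⟩
  · refine ⟨-snd x.1, neg_nonneg.2 (snd_nonpos_of_idx_eq x heq), by simp, ?_⟩
    exact Or.inr ⟨by simpa using heq, by simp⟩

end Interval

end ZLex

namespace GammaInterval.IsAdditiveMap

open ZLex

variable {G₁ G₂ : Type} [AddGroup G₁] [PartialOrder G₁] [AddLeftMono G₁] [AddRightMono G₁]
  [AddGroup G₂] [PartialOrder G₂] [AddLeftMono G₂] [AddRightMono G₂] {n : ℕ}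
  {f : GammaSet (mk (n : ℤ) (0 : G₁)) → GammaSet (mk (n : ℤ) (0 : G₂))}
  (hf : IsAdditiveMap f) (hn : 0 < n)
include hf hn

lemma idx_map_eq_zero {x : GammaSet (mk (n : ℤ) (0 : G₁))} (hx : idx x.1 = 0) :
    idx (f x).1 = 0 := by
  let y : GammaSet (mk (n : ℤ) (0 : G₁)) :=
    ⟨mk 0 ((n + 1) • snd x.1), mk_zero_mem hn (nsmul_nonneg (snd_nonneg_of_idx_eq_zero x hx) _)⟩
  have hy : idx (f y).1 = (n + 1) * idx (f x).1 := by
    simpa using congrArg idx (hf.val_nsmul (n + 1) (x := x) (y := y) (ext (by simp [y, hx]) rfl))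
  have hle := idx_le (f y)
  have hpos := idx_nonneg (f x)
  nlinarith

lemma idx_map_mk_nat (hf1 : (f ⟨mk (n : ℤ) 0, mk_nat_zero_mem le_rfl⟩).1 = mk (n : ℤ) 0)
    {i : ℕ} {x : GammaSet (mk (n : ℤ) (0 : G₁))} (hx : x.1 = mk i 0) : idx (f x).1 = i := by
  let e : GammaSet (mk (n : ℤ) (0 : G₁)) := ⟨mk 1 0, mk_nat_zero_mem hn⟩
  have hmul {k : ℕ} (y : GammaSet (mk (n : ℤ) (0 : G₁))) (hy : y.1 = mk k 0) :
      idx (f y).1 = k * idx (f e).1 := by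
    simpa using congrArg idx (hf.val_nsmul k (x := e) (ext (by simp [hy, e]) (by simp [hy, e])))
  have he : idx (f e).1 = 1 := by
    have := hmul ⟨mk (n : ℤ) 0, mk_nat_zero_mem le_rfl⟩ rfl
    rw [hf1, idx_mk] at this
    exact (mul_eq_left₀ (by exact_mod_cast hn.ne')).1 this.symm
  rw [hmul x hx, he, mul_one]

lemma idx_map [IsDirectedOrder G₁]
    (hf1 : (f ⟨mk (n : ℤ) 0, mk_nat_zero_mem le_rfl⟩).1 = mk (n : ℤ) 0)
    (x : GammaSet (mk (n : ℤ) (0 : G₁))) : idx (f x).1 = idx x.1 := by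
  obtain ⟨c, hc, hgc, hle⟩ := exists_add_mk_zero_le x
  obtain ⟨i, hi⟩ := Int.eq_ofNat_of_zero_le (idx_nonneg x)
  have hin : i ≤ n := by exact_mod_cast hi ▸ idx_le x
  let a : GammaSet (mk (n : ℤ) (0 : G₁)) := ⟨mk 0 c, mk_zero_mem hn hc⟩
  let b : GammaSet (mk (n : ℤ) (0 : G₁)) := ⟨mk i 0, mk_nat_zero_mem hin⟩
  let d : GammaSet (mk (n : ℤ) (0 : G₁)) := ⟨mk 0 (snd x.1 + c), mk_zero_mem hn hgc⟩
  have key := congrArg idx (hf.add_eq_add (a := x) (b := a) (c := b) (d := d)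
    (ext (by simp [a, b, d, hi]) (by simp [a, b, d])) hle)
  have hb : idx (f b).1 = i := hf.idx_map_mk_nat hn hf1 rfl
  rw [idx_add, idx_add, hf.idx_map_eq_zero hn (x := a) rfl, hf.idx_map_eq_zero hn (x := d) rfl,
    hb] at key
  simpa [hi] using key

/-- The map induced on the bottom component `E₀ ≅ G⁺`. -/
def bottomHom : AddSubmonoid.nonneg G₁ →+ G₂ where
  toFun g := snd (f ⟨mk 0 g, mk_zero_mem hn g.2⟩).1
  map_zero' := congrArg snd (hf.val_eq_zero rfl)
  map_add' a b := congrArg snd (hf _ _ ⟨mk 0 (a + b : G₁), mk_zero_mem hn (a + b).2⟩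
    (ext (by simp) (by simp))).symm

lemma val_map_eq_mk_bottomHom {x : GammaSet (mk (n : ℤ) (0 : G₁))} {g : G₁} (hg : 0 ≤ g)
    (hx : x.1 = mk 0 g) : (f x).1 = mk 0 (hf.bottomHom hn ⟨g, hg⟩) := by
  obtain rfl : x = ⟨mk 0 g, mk_zero_mem hn hg⟩ := Subtype.ext hx
  exact ext (hf.idx_map_eq_zero hn rfl) rfl

lemma bottomHom_nonneg (g : AddSubmonoid.nonneg G₁) : 0 ≤ hf.bottomHom hn g :=
  snd_nonneg_of_idx_eq_zero _ (hf.idx_map_eq_zero hn rfl)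

end GammaInterval.IsAdditiveMap

/-- a PEA morphism `f : Γ(ℤ ⃗× G₁,(n,0)) → Γ(ℤ ⃗× G₂,(n,0))`
(for torsion-free directed po-groups `G₁`, `G₂`) preserves the components of the
`n`-decompositions, and induces a unique po-group homomorphism `h : G₁ → G₂`
with `f(0,g) = (0, h(g))` for all `g ∈ G₁⁺`. -/
theorem stmt19 (G₁ G₂ : Type) [AddGroup G₁] [PartialOrder G₁]
    [CovariantClass G₁ G₁ (· + ·) (· ≤ ·)]
    [CovariantClass G₁ G₁ (Function.swap (· + ·)) (· ≤ ·)]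
    [AddGroup G₂] [PartialOrder G₂]
    [CovariantClass G₂ G₂ (· + ·) (· ≤ ·)]
    [CovariantClass G₂ G₂ (Function.swap (· + ·)) (· ≤ ·)]
    (hdir₁ : ∀ a b : G₁, ∃ c : G₁, a ≤ c ∧ b ≤ c)
    (n : ℕ) (hn : 1 ≤ n)
    (P₁ : PEA (GammaSet (ZLex.mk (n : ℤ) (0 : G₁))))
    (hP₁ : P₁ = GammaInterval.Gamma (ZLex.mk (n : ℤ) (0 : G₁)) (by exact Or.inl (show (0 : ℤ) < (n : ℤ) by exact_mod_cast hn)))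
    (P₂ : PEA (GammaSet (ZLex.mk (n : ℤ) (0 : G₂))))
    (hP₂ : P₂ = GammaInterval.Gamma (ZLex.mk (n : ℤ) (0 : G₂)) (by exact Or.inl (show (0 : ℤ) < (n : ℤ) by exact_mod_cast hn)))
    (f : GammaSet (ZLex.mk (n : ℤ) (0 : G₁)) → GammaSet (ZLex.mk (n : ℤ) (0 : G₂)))
    (hf1 : f P₁.one = P₂.one)
    (hfadd : ∀ a b, P₁.D a b →
      P₂.D (f a) (f b) ∧ f (P₁.add a b) = P₂.add (f a) (f b)) :
    (∀ i ≤ n, ∀ x : GammaSet (ZLex.mk (n : ℤ) (0 : G₁)),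
      ZLex.idx x.1 = (i : ℤ) → ZLex.idx (f x).1 = (i : ℤ)) ∧
    ∃! h : G₁ →+ G₂,
      (∀ g : G₁, 0 ≤ g → 0 ≤ h g) ∧
      ∀ (x : GammaSet (ZLex.mk (n : ℤ) (0 : G₁))) (g : G₁), 0 ≤ g →
        x.1 = ZLex.mk 0 g → (f x).1 = ZLex.mk 0 (h g) := by
  have : IsDirectedOrder G₁ := ⟨hdir₁⟩
  subst hP₁ hP₂
  have hf := GammaInterval.isAdditiveMap_of_map_add hfadd
  have hone := congrArg Subtype.val hf1
  refine ⟨fun i _ x hx ↦ (hf.idx_map hn hone x).trans hx, ?_⟩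
  obtain ⟨ψ, hψ⟩ := (hf.bottomHom hn).exists_extension_of_nonneg
  refine ⟨ψ, ⟨fun g hg ↦ ?_, fun x g hg hx ↦ ?_⟩, fun ψ' ⟨_, hψ'⟩ ↦ ?_⟩
  · exact hψ ⟨g, hg⟩ ▸ hf.bottomHom_nonneg hn _
  · exact hψ ⟨g, hg⟩ ▸ hf.val_map_eq_mk_bottomHom hn hg hx
  · refine AddMonoidHom.ext_nonneg fun g hg ↦ ?_
    let x : GammaSet (ZLex.mk (n : ℤ) (0 : G₁)) := ⟨ZLex.mk 0 g, ZLex.mk_zero_mem hn hg⟩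
    have h := (hψ' x g hg rfl).symm.trans (hf.val_map_eq_mk_bottomHom hn hg (x := x) rfl)
    rw [hψ ⟨g, hg⟩]
    exact congrArg ZLex.snd h
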